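/- With b_opt = ((1/SNR)·I + H·Hᵀ)⁻¹·H·a, the minimized value ‖Hᵀb_opt − a‖² + (1/SNR)‖b_opt‖² equals aᵀ(I + SNR·Hᵀ·H)⁻¹a. -/

import Mathlib

/-!
Write `r = a - Hᵀ b` for the residual at `b = b_opt`. The normal equation
`((1/SNR) I + H Hᵀ) b = H a` says exactly `b = SNR · H r`, and substituting this into
`Hᵀ b = a - r` gives `(I + SNR·Hᵀ H) r = a`, i.e. `r = (I + SNR·Hᵀ H)⁻¹ a`. The objective is then
`r·r + (1/SNR) b·b = r·r + (Hᵀ b)·r = (r + Hᵀ b)·r = a·r`.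
-/

open Matrix

section RidgeRegression

variable {m n 𝕜 : Type*} [Fintype m] [Fintype n] [DecidableEq m] [Field 𝕜]
  {H : Matrix m n 𝕜} {a : n → 𝕜} {b : m → 𝕜} {s : 𝕜}

theorem eq_smul_mulVec_sub_of_normal_eq (hs : s ≠ 0)
    (hb : ((1 / s) • (1 : Matrix m m 𝕜) + H * Hᵀ) *ᵥ b = H *ᵥ a) :
    b = s • H *ᵥ (a - Hᵀ *ᵥ b) := by
  rw [add_mulVec, smul_mulVec, one_mulVec, ← mulVec_mulVec] at hb
  rw [mulVec_sub, ← hb, add_sub_cancel_right, smul_smul, mul_one_div_cancel hs, one_smul]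

variable [DecidableEq n]

theorem one_add_smul_transpose_mul_self_mulVec_sub_eq (hs : s ≠ 0)
    (hb : ((1 / s) • (1 : Matrix m m 𝕜) + H * Hᵀ) *ᵥ b = H *ᵥ a) :
    (1 + s • (Hᵀ * H)) *ᵥ (a - Hᵀ *ᵥ b) = a := by
  conv_rhs => rw [← sub_add_cancel a (Hᵀ *ᵥ b)]
  rw [add_mulVec, one_mulVec, smul_mulVec, ← mulVec_mulVec, ← mulVec_smul,
    ← eq_smul_mulVec_sub_of_normal_eq hs hb]

theorem ridge_objective_eq_of_normal_eq (hs : s ≠ 0)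
    (hb : ((1 / s) • (1 : Matrix m m 𝕜) + H * Hᵀ) *ᵥ b = H *ᵥ a)
    (hB : IsUnit (1 + s • (Hᵀ * H))) :
    (Hᵀ *ᵥ b - a) ⬝ᵥ (Hᵀ *ᵥ b - a) + (1 / s) * (b ⬝ᵥ b)
      = a ⬝ᵥ ((1 + s • (Hᵀ * H))⁻¹ *ᵥ a) := by
  set r := a - Hᵀ *ᵥ b
  have hr : (1 + s • (Hᵀ * H))⁻¹ *ᵥ a = r := by
    rw [← one_add_smul_transpose_mul_self_mulVec_sub_eq hs hb, mulVec_mulVec,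
      nonsing_inv_mul _ ((isUnit_iff_isUnit_det _).1 hB), one_mulVec]
  have hb_sq : (1 / s) * (b ⬝ᵥ b) = (Hᵀ *ᵥ b) ⬝ᵥ r := by
    nth_rw 2 [eq_smul_mulVec_sub_of_normal_eq hs hb]
    rw [dotProduct_smul, smul_eq_mul, one_div, inv_mul_cancel_left₀ hs, dotProduct_mulVec,
      ← mulVec_transpose]
  calc (Hᵀ *ᵥ b - a) ⬝ᵥ (Hᵀ *ᵥ b - a) + (1 / s) * (b ⬝ᵥ b)
      = r ⬝ᵥ r + (Hᵀ *ᵥ b) ⬝ᵥ r := by rw [hb_sq, ← neg_sub, neg_dotProduct_neg]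
    _ = a ⬝ᵥ ((1 + s • (Hᵀ * H))⁻¹ *ᵥ a) := by rw [hr, ← add_dotProduct, sub_add_cancel]

end RidgeRegression

theorem posDef_smul_one_add_mul_transpose {m n : Type*} [Fintype m] [Fintype n] [DecidableEq m]
    (H : Matrix m n ℝ) {c : ℝ} (hc : 0 < c) : (c • (1 : Matrix m m ℝ) + H * Hᵀ).PosDef := by
  simpa using (PosDef.one.smul hc).add_posSemidef (posSemidef_self_mul_conjTranspose H)

theorem posDef_one_add_smul_transpose_mul {m n : Type*} [Fintype m] [Fintype n] [DecidableEq n]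
    (H : Matrix m n ℝ) {c : ℝ} (hc : 0 ≤ c) : (1 + c • (Hᵀ * H)).PosDef := by
  simpa using PosDef.one.add_posSemidef ((posSemidef_conjTranspose_mul_self H).smul hc)

/-- the minimized value equals aᵀ(I + SNR·Hᵀ·H)⁻¹a. -/
theorem stmt3 (m k : ℕ) (H : Matrix (Fin m) (Fin k) ℝ) (a : Fin k → ℝ)
    (SNR : ℝ) (hSNR : 0 < SNR)
    (bopt : Fin m → ℝ)
    (hbopt : bopt = ((1 / SNR) • (1 : Matrix (Fin m) (Fin m) ℝ)
        + H * H.transpose)⁻¹.mulVec (H.mulVec a)) :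
    (∑ j, ((H.transpose.mulVec bopt) j - a j) ^ 2) + (1 / SNR) * ∑ i, (bopt i) ^ 2
      = dotProduct a (((1 : Matrix (Fin k) (Fin k) ℝ) + SNR • (H.transpose * H))⁻¹.mulVec a) := by
  have hA := (posDef_smul_one_add_mul_transpose H (one_div_pos.2 hSNR)).isUnit
  have hnormal : ((1 / SNR) • (1 : Matrix (Fin m) (Fin m) ℝ) + H * Hᵀ) *ᵥ bopt = H *ᵥ a := by
    rw [hbopt, mulVec_mulVec, mul_nonsing_inv _ ((isUnit_iff_isUnit_det _).1 hA), one_mulVec]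
  rw [← ridge_objective_eq_of_normal_eq hSNR.ne' hnormal
    (posDef_one_add_smul_transpose_mul H hSNR.le).isUnit]
  simp only [dotProduct, sq, Pi.sub_apply]
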